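/- The centralizer of the subalgebra ℂ[S_{n−1}] in the group algebra ℂ[S_n] is a commutative algebra, where S_{n−1} ⊆ S_n is the subgroup of permutations fixing n. -/

import Mathlib

/-!
Gelfand's trick. Every permutation `σ` of `Fin (n + 1)` is conjugate to `σ⁻¹` by a permutation
fixing the last point: reflect every cycle of `σ` in a base point, `σ ^ j b ↦ σ ^ (-j) b`,
taking the last point as the base point of its own cycle. Hence every element `z` of the
centralizer of `ℂ[S_{n-1}]` has coefficients satisfying `z(σ⁻¹) = z(σ)`, i.e. is fixed by the
antipode `S : σ ↦ σ⁻¹` of `ℂ[S_n]`. The antipode reverses products and the centralizer is a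
subalgebra, so for `x, y` in it `x * y = S (x * y) = S y * S x = y * x`.
-/

/-- The group algebra `ℂ[S_{n-1}]` sitting inside `ℂ[S_n]`, where `S_n` is realized as
`Equiv.Perm (Fin (n+1))` (so `S_{n-1}` is the subgroup of permutations fixing the last
point). -/
noncomputable def smallGroupAlgebra (n : ℕ) :
    Subalgebra ℂ (MonoidAlgebra ℂ (Equiv.Perm (Fin (n + 1)))) :=
  Algebra.adjoin ℂ
    {a : MonoidAlgebra ℂ (Equiv.Perm (Fin (n + 1))) |
      ∃ σ : Equiv.Perm (Fin (n + 1)), σ (Fin.last n) = Fin.last n ∧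
        a = MonoidAlgebra.of ℂ (Equiv.Perm (Fin (n + 1))) σ}

/-- The centralizer of `ℂ[S_{n-1}]` inside `ℂ[S_n]`. -/
noncomputable def smallCentralizer (n : ℕ) :
    Subalgebra ℂ (MonoidAlgebra ℂ (Equiv.Perm (Fin (n + 1)))) :=
  Subalgebra.centralizer ℂ
    ((smallGroupAlgebra n : Set (MonoidAlgebra ℂ (Equiv.Perm (Fin (n + 1))))))

open Equiv MonoidAlgebra HopfAlgebra

namespace Equiv.Perm

variable {α : Type*}

theorem zpow_neg_apply_eq_of_zpow_apply_eq (σ : Perm α) {i j : ℤ} {x : α}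
    (h : (σ ^ i) x = (σ ^ j) x) : (σ ^ (-i)) x = (σ ^ (-j)) x := by
  have := congrArg (σ ^ (-i - j)) h
  rw [← mul_apply, ← mul_apply, ← zpow_add, ← zpow_add] at this
  rwa [show -i - j + i = -j by ring, show -i - j + j = -i by ring, eq_comm] at this

theorem exists_sameCycle_basepoint (σ : Perm α) (p : α) :
    ∃ b : α → α, (∀ x, σ.SameCycle (b x) x) ∧ (∀ x y, σ.SameCycle x y → b x = b y) ∧
      b p = p := by
  classical
  let s := SameCycle.setoid σ
  refine ⟨fun x => if σ.SameCycle p x then p else (Quotient.mk s x).out, fun x => ?_,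
    fun x y hxy => ?_, if_pos (SameCycle.refl σ p)⟩
  · dsimp only
    split_ifs with hx
    · exact hx
    · exact Quotient.mk_out (s := s) x
  · have hp : σ.SameCycle p x ↔ σ.SameCycle p y := ⟨(·.trans hxy), (·.trans hxy.symm)⟩
    simp only [hp, Quotient.sound (s := s) hxy]

theorem exists_fixing_conj_eq_inv (σ : Perm α) (p : α) :
    ∃ τ : Perm α, τ p = p ∧ τ * σ * τ⁻¹ = σ⁻¹ := by
  obtain ⟨b, hb, hb_eq, hbp⟩ := exists_sameCycle_basepoint σ p
  choose k hk using hb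
  let τ : α → α := fun x => (σ ^ (-k x)) (b x)
  have hτ : ∀ x (j : ℤ), (σ ^ j) (b x) = x → τ x = (σ ^ (-j)) (b x) := fun x j hj =>
    zpow_neg_apply_eq_of_zpow_apply_eq σ ((hk x).trans hj.symm)
  have hbτ : ∀ x, b (τ x) = b x := fun x =>
    (hb_eq _ _ ⟨-k x, rfl⟩).symm.trans (hb_eq _ _ ⟨k x, hk x⟩)
  have hτ_invol : Function.Involutive τ := fun x => by
    rw [hτ (τ x) (-k x) (by rw [hbτ]), neg_neg, hbτ, hk]
  have hτσ : ∀ x, τ (σ x) = σ⁻¹ (τ x) := fun x => by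
    have hbσ : b (σ x) = b x := (hb_eq _ _ ⟨1, by simp⟩).symm
    rw [hτ (σ x) (1 + k x) (by rw [hbσ, zpow_one_add, mul_apply, hk]), hbσ, neg_add,
      zpow_add, zpow_neg_one, mul_apply]
  refine ⟨hτ_invol.toPerm τ, by simpa [hbp] using hτ p 0 (by simp [hbp]), ?_⟩
  ext x
  simp [Perm.inv_def, hτσ, hτ_invol x]

end Equiv.Perm

theorem HopfAlgebra.commute_of_antipode_eq_self {R A : Type*} [CommSemiring R] [Semiring A]
    [HopfAlgebra R A] {x y : A} (hx : antipode R x = x) (hy : antipode R y = y)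
    (hxy : antipode R (x * y) = x * y) : Commute x y := by
  rw [Commute, SemiconjBy, ← hxy, antipode_mul_antidistrib, hx, hy]

namespace MonoidAlgebra

variable {R G : Type*} [CommSemiring R] [Group G]

theorem coeff_antipode (x : R[G]) (g : G) : (antipode R x).coeff g = x.coeff g⁻¹ := by
  classical
  induction x using induction_linear with
  | zero => simp
  | add x y hx hy => simp [hx, hy]
  | single h r => simp [Finsupp.single_apply, inv_eq_iff_eq_inv]

theorem antipode_eq_self_of_forall_coeff_inv {x : R[G]} (hx : ∀ g, x.coeff g⁻¹ = x.coeff g) :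
    antipode R x = x := by
  ext g
  rw [coeff_antipode, hx]

theorem coeff_conj_eq_of_commute {k : Type*} [Semiring k] {z : k[G]} {g : G}
    (hz : Commute (of k G g) z) (σ : G) : z.coeff (g * σ * g⁻¹) = z.coeff σ := by
  simpa using congrArg (coeff · (g * σ)) hz.eq.symm

theorem antipode_eq_self_of_forall_commute_of {H : Set G}
    (hH : ∀ g : G, ∃ h ∈ H, h * g * h⁻¹ = g⁻¹) {z : R[G]}
    (hz : ∀ h ∈ H, Commute (of R G h) z) : antipode R z = z :=
  antipode_eq_self_of_forall_coeff_inv fun g => by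
    obtain ⟨h, hh, hconj⟩ := hH g
    rw [← hconj, coeff_conj_eq_of_commute (hz h hh)]

theorem commute_of_forall_commute_of {H : Set G} (hH : ∀ g : G, ∃ h ∈ H, h * g * h⁻¹ = g⁻¹)
    {x y : R[G]} (hx : ∀ h ∈ H, Commute (of R G h) x) (hy : ∀ h ∈ H, Commute (of R G h) y) :
    Commute x y :=
  commute_of_antipode_eq_self (antipode_eq_self_of_forall_commute_of hH hx)
    (antipode_eq_self_of_forall_commute_of hH hy)
    (antipode_eq_self_of_forall_commute_of hH fun h hh => (hx h hh).mul_right (hy h hh))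

end MonoidAlgebra

theorem commute_of_mem_smallCentralizer {n : ℕ} {z : MonoidAlgebra ℂ (Perm (Fin (n + 1)))}
    (hz : z ∈ smallCentralizer n) {h : Perm (Fin (n + 1))} (hh : h (Fin.last n) = Fin.last n) :
    Commute (of ℂ _ h) z :=
  (Subalgebra.mem_centralizer_iff ℂ).mp hz _ (Algebra.subset_adjoin ⟨h, hh, rfl⟩)

/-- The centralizer of the subalgebra `ℂ[S_{n-1}]` in the group algebra `ℂ[S_n]`
is a commutative algebra. -/
theorem centralizer_of_smaller_group_algebra_commutative (n : ℕ) :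
    ∀ x ∈ smallCentralizer n, ∀ y ∈ smallCentralizer n, x * y = y * x := by
  intro x hx y hy
  exact (commute_of_forall_commute_of
    (H := {τ : Perm (Fin (n + 1)) | τ (Fin.last n) = Fin.last n})
    (fun σ => Perm.exists_fixing_conj_eq_inv σ (Fin.last n))
    (fun _ => commute_of_mem_smallCentralizer hx) (fun _ => commute_of_mem_smallCentralizer hy)).eq
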